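/- arXiv:1902.02428 — 4 statements merged into one kernel-verified Lean document; each statement's English description precedes it below -/
import Mathlib

section
/- Let g : {-1,1}^n → [0,1] and let d be a positive integer. Then the level-d Fourier weight in L2-norm satisfies ∑_{|S|=d} ĝ(S)^2 ≤ 4 · E[g]^2 · (2e · ln(e / E[g]^{1/d}))^d. -/
/-!
Write `W` for the level-`d` weight, `μ = E[g]` and `F = ∑_{|S|=d} ĝ(S) χ_S`, so that `W = E[g F]`.
As `0 ≤ g ≤ 1`, Jensen's inequality for the even power `2m` with weights `g` gives
`W^{2m} ≤ μ^{2m-1} E[F^{2m}]`, and the Bonami inequality `E[F^{2m}] ≤ ((2m-1)^d W)^m` turns this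
into `W^m ≤ μ^{2m-1} (2m-1)^{dm}`. Bonami's inequality is proved one coordinate at a time: pairing
`x` with its flip in that coordinate reduces it to the two-point inequality
`(b+a)^{2m} + (b-a)^{2m} ≤ 2((2m-1)a^2 + b^2)^m`, a comparison of binomial coefficients, and
Minkowski's inequality in `L^m` recombines the two halves. Finally `m = ⌈1 + u⌉` with
`u = ln(1/μ)/d` makes `μ^{-1/m} (2m-1)^d ≤ ((3+2u) e^{u/(1+u)})^d ≤ (2e(1+u))^d`.
-/

open Finset

/-- The sign of a Boolean bit, as a real number in `{-1, 1}`. -/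
noncomputable def sgn (b : Bool) : ℝ := if b then 1 else -1

/-- Fourier coefficient of `f : {-1,1}^n → ℝ` at `S`, over the uniform distribution. -/
noncomputable def fhat {n : ℕ} (f : (Fin n → Bool) → ℝ) (S : Finset (Fin n)) : ℝ :=
  (∑ x : Fin n → Bool, f x * ∏ i ∈ S, sgn (x i)) / 2 ^ n

open Real

theorem two_mul_sub_one_nonneg {m : ℕ} (hm : m ≠ 0) : (0 : ℝ) ≤ 2 * m - 1 := by
  have : (1 : ℝ) ≤ m := by exact_mod_cast Nat.one_le_iff_ne_zero.mpr hm
  linarith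

theorem choose_two_mul_two_mul_le {m k : ℕ} (hk : k ≤ m) :
    (2 * m).choose (2 * k) ≤ (2 * m - 1) ^ k * m.choose k := by
  induction k with
  | zero => simp
  | succ k ih =>
    obtain ⟨r, rfl⟩ := Nat.exists_eq_add_of_le hk
    have h1 := Nat.choose_succ_right_eq (2 * (k + 1 + r)) (2 * k)
    have h2 := Nat.choose_succ_right_eq (2 * (k + 1 + r)) (2 * k + 1)
    have h3 := Nat.choose_succ_right_eq (k + 1 + r) k
    rw [show 2 * (k + 1 + r) - 2 * k = 2 * (r + 1) by omega] at h1
    rw [show 2 * (k + 1 + r) - (2 * k + 1) = 2 * r + 1 by omega] at h2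
    rw [show k + 1 + r - k = r + 1 by omega] at h3
    have hodd : 2 * r + 1 ≤ (2 * (k + 1 + r) - 1) * (2 * k + 1) :=
      le_trans (by omega) (Nat.le_mul_of_pos_right _ (by omega))
    specialize ih (by omega)
    refine Nat.le_of_mul_le_mul_right ?_ (by positivity : 0 < (2 * k + 1) * (2 * k + 2))
    calc (2 * (k + 1 + r)).choose (2 * (k + 1)) * ((2 * k + 1) * (2 * k + 2))
        = (2 * (k + 1 + r)).choose (2 * k) * (2 * (r + 1)) * (2 * r + 1) := by
          linear_combination (2 * k + 1) * h2 + (2 * r + 1) * h1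
      _ ≤ (2 * (k + 1 + r) - 1) ^ k * (k + 1 + r).choose k * (2 * (r + 1))
            * ((2 * (k + 1 + r) - 1) * (2 * k + 1)) := by gcongr
      _ = (2 * (k + 1 + r) - 1) ^ (k + 1) * (k + 1 + r).choose (k + 1)
            * ((2 * k + 1) * (2 * k + 2)) := by
          linear_combination (2 * (2 * k + 1) * (2 * (k + 1 + r) - 1) ^ (k + 1)) * h3.symm

theorem sum_range_two_mul_add_one {M : Type*} [AddCommMonoid M] (f : ℕ → M) (m : ℕ) :
    ∑ j ∈ range (2 * m + 1), f j =
      ∑ k ∈ range (m + 1), f (2 * k) + ∑ k ∈ range m, f (2 * k + 1) := by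
  induction m with
  | zero => simp
  | succ m ih =>
    rw [sum_range_succ (fun k => f (2 * k)), sum_range_succ (fun k => f (2 * k + 1)),
      show 2 * (m + 1) + 1 = 2 * m + 1 + 1 + 1 by ring, sum_range_succ, sum_range_succ, ih]
    simp only [mul_add_one, add_assoc, add_comm, add_left_comm]

theorem add_pow_two_mul_add_sub_pow_two_mul_le (a b : ℝ) (m : ℕ) :
    (b + a) ^ (2 * m) + (b - a) ^ (2 * m) ≤ 2 * ((2 * m - 1) * a ^ 2 + b ^ 2) ^ m := by
  obtain rfl | hm := eq_or_ne m 0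
  · norm_num
  have hβ : ((2 * m - 1 : ℕ) : ℝ) = 2 * m - 1 := by
    rw [Nat.cast_sub (by omega)]; push_cast; ring
  have hexpand : (b + a) ^ (2 * m) + (b - a) ^ (2 * m)
      = ∑ j ∈ range (2 * m + 1), (a ^ j + (-a) ^ j) * b ^ (2 * m - j) * (2 * m).choose j := by
    rw [add_comm b a, sub_eq_neg_add, add_pow, add_pow, ← sum_add_distrib]
    exact sum_congr rfl fun j _ => by ring
  have hodd : ∑ k ∈ range m,
      (a ^ (2 * k + 1) + (-a) ^ (2 * k + 1)) * b ^ (2 * m - (2 * k + 1))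
        * ((2 * m).choose (2 * k + 1) : ℝ) = 0 :=
    sum_eq_zero fun k _ => by rw [Odd.neg_pow ⟨k, rfl⟩]; ring
  rw [hexpand, sum_range_two_mul_add_one, hodd, add_zero, add_pow, mul_sum]
  refine sum_le_sum fun k hk => ?_
  have hkm : k ≤ m := Nat.lt_succ_iff.mp (mem_range.mp hk)
  have hchoose : ((2 * m).choose (2 * k) : ℝ) ≤ (2 * m - 1) ^ k * m.choose k := by
    rw [← hβ]; exact_mod_cast choose_two_mul_two_mul_le hkm
  rw [Even.neg_pow (even_two_mul k), ← Nat.mul_sub, pow_mul, pow_mul, mul_pow]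
  have : 0 ≤ (a ^ 2) ^ k * (b ^ 2) ^ (m - k) := by positivity
  nlinarith

theorem sum_add_pow_le_of_sum_pow_le {ι : Type*} (s : Finset ι) {X Y : ι → ℝ}
    (hX : ∀ i ∈ s, 0 ≤ X i) (hY : ∀ i ∈ s, 0 ≤ Y i) {m : ℕ} (hm : m ≠ 0) {K a b : ℝ}
    (hK : 0 ≤ K) (ha : 0 ≤ a) (hb : 0 ≤ b)
    (hXa : ∑ i ∈ s, X i ^ m ≤ K * a ^ m) (hYb : ∑ i ∈ s, Y i ^ m ≤ K * b ^ m) :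
    ∑ i ∈ s, (X i + Y i) ^ m ≤ K * (a + b) ^ m := by
  have root_le {Z : ι → ℝ} {c : ℝ} (hZ0 : ∀ i ∈ s, 0 ≤ Z i) (hc : 0 ≤ c)
      (hZ : ∑ i ∈ s, Z i ^ m ≤ K * c ^ m) :
      (∑ i ∈ s, Z i ^ m) ^ (m⁻¹ : ℝ) ≤ K ^ (m⁻¹ : ℝ) * c := by
    calc (∑ i ∈ s, Z i ^ m) ^ (m⁻¹ : ℝ) ≤ (K * c ^ m) ^ (m⁻¹ : ℝ) := by
          gcongr
          exact sum_nonneg fun i hi => pow_nonneg (hZ0 i hi) m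
      _ = K ^ (m⁻¹ : ℝ) * c := by rw [mul_rpow hK (by positivity), pow_rpow_inv_natCast hc hm]
  have hmink := Lp_add_le_of_nonneg (p := m) s
    (by exact_mod_cast Nat.one_le_iff_ne_zero.mpr hm) hX hY
  simp only [rpow_natCast, one_div] at hmink
  have hXY : 0 ≤ ∑ i ∈ s, (X i + Y i) ^ m :=
    sum_nonneg fun i hi => pow_nonneg (add_nonneg (hX i hi) (hY i hi)) m
  calc ∑ i ∈ s, (X i + Y i) ^ m = ((∑ i ∈ s, (X i + Y i) ^ m) ^ (m⁻¹ : ℝ)) ^ m :=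
        (rpow_inv_natCast_pow hXY hm).symm
    _ ≤ (K ^ (m⁻¹ : ℝ) * a + K ^ (m⁻¹ : ℝ) * b) ^ m := by
        gcongr
        exact hmink.trans (add_le_add (root_le hX ha hXa) (root_le hY hb hYb))
    _ = K * (a + b) ^ m := by rw [← mul_add, mul_pow, rpow_inv_natCast_pow hK hm]

theorem pow_sum_mul_le_of_even {ι : Type*} (s : Finset ι) {w : ι → ℝ}
    (hw : ∀ i ∈ s, 0 ≤ w i) (z : ι → ℝ) {p : ℕ} (hp : Even p) (hp0 : p ≠ 0) :
    (∑ i ∈ s, w i * z i) ^ p ≤ (∑ i ∈ s, w i) ^ (p - 1) * ∑ i ∈ s, w i * z i ^ p := by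
  obtain hW | hW := (sum_nonneg hw).eq_or_lt
  · have hw0 := (sum_eq_zero_iff_of_nonneg hw).mp hW.symm
    have hzero (f : ι → ℝ) : ∑ i ∈ s, w i * f i = 0 :=
      sum_eq_zero fun i hi => by rw [hw0 i hi, zero_mul]
    rw [hzero, hzero, zero_pow hp0, mul_zero]
  have hjensen := pow_arith_mean_le_arith_mean_pow_of_even s (fun i => w i / ∑ j ∈ s, w j) z
    (fun i hi => div_nonneg (hw i hi) hW.le) (by rw [← sum_div, div_self hW.ne']) hp
  simp only [div_mul_eq_mul_div, ← sum_div, div_pow] at hjensen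
  rw [div_le_div_iff₀ (by positivity) hW, ← pow_sub_one_mul hp0 (∑ i ∈ s, w i)] at hjensen
  nlinarith

theorem sgn_sq (b : Bool) : sgn b ^ 2 = 1 := by cases b <;> simp [sgn]

theorem sgn_not (b : Bool) : sgn (!b) = -sgn b := by cases b <;> simp [sgn]

section Walsh

variable {ι : Type*}

noncomputable def chi (S : Finset ι) (x : ι → Bool) : ℝ := ∏ i ∈ S, sgn (x i)

@[simp]
theorem chi_empty (x : ι → Bool) : chi ∅ x = 1 := prod_empty

variable [DecidableEq ι]

theorem chi_insert {i : ι} {S : Finset ι} (hi : i ∉ S) (x : ι → Bool) :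
    chi (insert i S) x = sgn (x i) * chi S x :=
  prod_insert hi

theorem chi_update_of_notMem {i : ι} {S : Finset ι} (hi : i ∉ S) (x : ι → Bool) (b : Bool) :
    chi S (Function.update x i b) = chi S x :=
  prod_congr rfl fun j hj => by rw [Function.update_of_ne (ne_of_mem_of_not_mem hj hi)]

theorem sum_add_sgn_mul_pow_le [Fintype ι] (i : ι) {B C : (ι → Bool) → ℝ}
    (hB : ∀ x b, B (Function.update x i b) = B x) (hC : ∀ x b, C (Function.update x i b) = C x)
    (m : ℕ) :
    ∑ x, (B x + sgn (x i) * C x) ^ (2 * m) ≤ ∑ x, ((2 * m - 1) * C x ^ 2 + B x ^ 2) ^ m := by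
  let σ : Equiv.Perm (ι → Bool) :=
    Function.Involutive.toPerm (fun x => Function.update x i (!x i)) fun x => by simp
  have hσ (x : ι → Bool) :
      B (σ x) + sgn (σ x i) * C (σ x) = B x - sgn (x i) * C x := by
    rw [show σ x = Function.update x i (!x i) from rfl, hB, hC, Function.update_self, sgn_not]
    ring
  have hpair (x : ι → Bool) : (B x + sgn (x i) * C x) ^ (2 * m) +
      (B (σ x) + sgn (σ x i) * C (σ x)) ^ (2 * m) ≤ 2 * ((2 * m - 1) * C x ^ 2 + B x ^ 2) ^ m := by
    have := add_pow_two_mul_add_sub_pow_two_mul_le (sgn (x i) * C x) (B x) m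
    rwa [mul_pow, sgn_sq, one_mul, ← hσ] at this
  calc ∑ x, (B x + sgn (x i) * C x) ^ (2 * m)
      = (∑ x, ((B x + sgn (x i) * C x) ^ (2 * m) +
          (B (σ x) + sgn (σ x i) * C (σ x)) ^ (2 * m))) / 2 := by
        rw [sum_add_distrib, Equiv.sum_comp σ (fun x => (B x + sgn (x i) * C x) ^ (2 * m))]
        ring
    _ ≤ (∑ x, 2 * ((2 * m - 1) * C x ^ 2 + B x ^ 2) ^ m) / 2 := by gcongr with x; exact hpair x
    _ = ∑ x, ((2 * m - 1) * C x ^ 2 + B x ^ 2) ^ m := by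
        rw [← mul_sum, mul_div_cancel_left₀ _ two_ne_zero]

theorem bonami_powerset [Fintype ι] {m : ℕ} (hm : m ≠ 0) (T : Finset ι) (A : Finset ι → ℝ) :
    ∑ x : ι → Bool, (∑ S ∈ T.powerset, A S * chi S x) ^ (2 * m) ≤
      2 ^ Fintype.card ι * (∑ S ∈ T.powerset, (2 * m - 1 : ℝ) ^ #S * A S ^ 2) ^ m := by
  have hβ := two_mul_sub_one_nonneg hm
  induction T using Finset.induction_on generalizing A with
  | empty => simp [← pow_mul]
  | insert i T hi ih =>
    have hnotMem {S : Finset ι} (hS : S ∈ T.powerset) : i ∉ S := fun h => hi (mem_powerset.mp hS h)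
    have hindep (A' : Finset ι → ℝ) (x : ι → Bool) (b : Bool) :
        ∑ S ∈ T.powerset, A' S * chi S (Function.update x i b) = ∑ S ∈ T.powerset, A' S * chi S x :=
      sum_congr rfl fun S hS => by rw [chi_update_of_notMem (hnotMem hS)]
    have hsplit (x : ι → Bool) : ∑ S ∈ (insert i T).powerset, A S * chi S x =
        ∑ S ∈ T.powerset, A S * chi S x +
          sgn (x i) * ∑ S ∈ T.powerset, A (insert i S) * chi S x := by
      rw [sum_powerset_insert hi, mul_sum]
      congr 1
      exact sum_congr rfl fun S hS => by rw [chi_insert (hnotMem hS)]; ring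
    have hcoef : ∑ S ∈ (insert i T).powerset, (2 * m - 1 : ℝ) ^ #S * A S ^ 2 =
        (2 * m - 1) * ∑ S ∈ T.powerset, (2 * m - 1 : ℝ) ^ #S * A (insert i S) ^ 2
          + ∑ S ∈ T.powerset, (2 * m - 1 : ℝ) ^ #S * A S ^ 2 := by
      rw [sum_powerset_insert hi, add_comm, mul_sum]
      congr 1
      exact sum_congr rfl fun S hS => by rw [card_insert_of_notMem (hnotMem hS), pow_succ]; ring
    simp_rw [hsplit, hcoef]
    refine (sum_add_sgn_mul_pow_le i (hindep _) (hindep _) m).trans <|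
      sum_add_pow_le_of_sum_pow_le _ (fun x _ => by positivity) (fun x _ => by positivity)
        hm (by positivity) (mul_nonneg hβ (sum_nonneg fun S _ => by positivity))
        (sum_nonneg fun S _ => by positivity) ?_ ?_
    · simp only [mul_pow, ← pow_mul, ← mul_sum]
      rw [mul_left_comm]
      exact mul_le_mul_of_nonneg_left (ih _) (by positivity)
    · simpa only [← pow_mul] using ih A

theorem bonami [Fintype ι] {m : ℕ} (hm : m ≠ 0) (𝒮 : Finset (Finset ι)) (A : Finset ι → ℝ) :
    ∑ x : ι → Bool, (∑ S ∈ 𝒮, A S * chi S x) ^ (2 * m) ≤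
      2 ^ Fintype.card ι * (∑ S ∈ 𝒮, (2 * m - 1 : ℝ) ^ #S * A S ^ 2) ^ m := by
  simpa [ite_pow, ite_mul, mul_ite, sum_ite_mem, hm] using
    bonami_powerset hm univ (fun S => if S ∈ 𝒮 then A S else 0)

end Walsh

theorem two_pow_mul_fhat_empty {n : ℕ} (g : (Fin n → Bool) → ℝ) :
    2 ^ n * fhat g ∅ = ∑ x, g x := by
  simp [fhat, mul_div_cancel₀]

theorem fhat_empty_mem_Icc {n : ℕ} {g : (Fin n → Bool) → ℝ}
    (hg : ∀ x, g x ∈ Set.Icc (0 : ℝ) 1) : fhat g ∅ ∈ Set.Icc (0 : ℝ) 1 := by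
  have hsum := two_pow_mul_fhat_empty g
  have h0 : 0 ≤ ∑ x, g x := sum_nonneg fun x _ => (hg x).1
  have h1 : ∑ x, g x ≤ 2 ^ n := by simpa using sum_le_sum fun x (_ : x ∈ univ) => (hg x).2
  constructor <;> nlinarith [pow_pos (two_pos (α := ℝ)) n]

theorem two_pow_mul_sum_fhat_sq {n : ℕ} (g : (Fin n → Bool) → ℝ) (𝒮 : Finset (Finset (Fin n))) :
    2 ^ n * ∑ S ∈ 𝒮, fhat g S ^ 2 = ∑ x, g x * ∑ S ∈ 𝒮, fhat g S * chi S x := by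
  have hfhat (S : Finset (Fin n)) : 2 ^ n * fhat g S = ∑ x, g x * chi S x := by
    rw [fhat, mul_div_cancel₀ _ (by positivity)]
    rfl
  calc 2 ^ n * ∑ S ∈ 𝒮, fhat g S ^ 2 = ∑ S ∈ 𝒮, fhat g S * (2 ^ n * fhat g S) := by
        rw [mul_sum]; exact sum_congr rfl fun S _ => by ring
    _ = ∑ x, g x * ∑ S ∈ 𝒮, fhat g S * chi S x := by
        simp_rw [hfhat, mul_sum]
        rw [sum_comm]
        exact sum_congr rfl fun x _ => sum_congr rfl fun S _ => by ring

theorem sum_fhat_sq_pow_le {n : ℕ} {g : (Fin n → Bool) → ℝ} (hg : ∀ x, g x ∈ Set.Icc (0 : ℝ) 1)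
    (d : ℕ) {m : ℕ} (hm : m ≠ 0) :
    (∑ S ∈ univ.filter (fun S : Finset (Fin n) => S.card = d), fhat g S ^ 2) ^ m ≤
      fhat g ∅ ^ (2 * m - 1) * ((2 * m - 1 : ℝ) ^ d) ^ m := by
  set 𝒮 := univ.filter (fun S : Finset (Fin n) => S.card = d)
  set W := ∑ S ∈ 𝒮, fhat g S ^ 2
  set F := fun x => ∑ S ∈ 𝒮, fhat g S * chi S x
  have hW : 0 ≤ W := sum_nonneg fun S _ => sq_nonneg _
  have hμ : 0 ≤ fhat g ∅ := (fhat_empty_mem_Icc hg).1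
  have hbonami : ∑ x, F x ^ (2 * m) ≤ 2 ^ n * ((2 * m - 1 : ℝ) ^ d * W) ^ m := by
    have hlevel : ∑ S ∈ 𝒮, (2 * m - 1 : ℝ) ^ #S * fhat g S ^ 2 = (2 * m - 1 : ℝ) ^ d * W := by
      rw [mul_sum]
      exact sum_congr rfl fun S hS => by rw [(mem_filter.mp hS).2]
    simpa only [Fintype.card_fin, hlevel] using bonami hm 𝒮 (fhat g)
  have hjensen := pow_sum_mul_le_of_even univ (fun x _ => (hg x).1) F
    (even_two_mul m) (by omega)
  have hg1 : ∑ x, g x * F x ^ (2 * m) ≤ ∑ x, F x ^ (2 * m) :=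
    sum_le_sum fun x _ => mul_le_of_le_one_left (Even.pow_nonneg (even_two_mul m) _) (hg x).2
  rw [← two_pow_mul_sum_fhat_sq, ← two_pow_mul_fhat_empty] at hjensen
  have hcancel : (2 ^ n) ^ (2 * m) * (W ^ m * W ^ m) ≤
      (2 ^ n) ^ (2 * m) * (W ^ m * (fhat g ∅ ^ (2 * m - 1) * ((2 * m - 1 : ℝ) ^ d) ^ m)) :=
    calc (2 ^ n) ^ (2 * m) * (W ^ m * W ^ m) = (2 ^ n * W) ^ (2 * m) := by ring
      _ ≤ (2 ^ n * fhat g ∅) ^ (2 * m - 1) * (2 ^ n * ((2 * m - 1 : ℝ) ^ d * W) ^ m) :=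
          hjensen.trans (by gcongr; exact hg1.trans hbonami)
      _ = (2 ^ n) ^ (2 * m) * (W ^ m * (fhat g ∅ ^ (2 * m - 1) * ((2 * m - 1 : ℝ) ^ d) ^ m)) := by
          rw [← pow_sub_one_mul (by omega : 2 * m ≠ 0) (2 ^ n : ℝ)]; ring
  obtain hW0 | hWpos := hW.eq_or_lt
  · rw [← hW0, zero_pow hm]
    have := two_mul_sub_one_nonneg hm
    positivity
  exact le_of_mul_le_mul_left (le_of_mul_le_mul_left hcancel (by positivity)) (by positivity)

theorem three_add_two_mul_mul_exp_div_le {u : ℝ} (hu : 0 ≤ u) :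
    (3 + 2 * u) * exp (u / (1 + u)) ≤ 2 * exp 1 * (1 + u) := by
  have hexp : exp (u / (1 + u)) * exp (1 / (1 + u)) = exp 1 := by
    rw [← exp_add, ← add_div, add_comm u, div_self (by positivity)]
  have hle : 2 + u ≤ (1 + u) * exp (1 / (1 + u)) := by
    have := add_one_le_exp (1 / (1 + u))
    rw [div_add_one (by positivity), div_le_iff₀' (by positivity)] at this
    linarith
  rw [← hexp]
  nlinarith [exp_pos (u / (1 + u))]

theorem two_mul_sub_one_pow_mul_exp_le {u : ℝ} (hu : 0 ≤ u) {m : ℕ} (h1 : 1 + u ≤ m)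
    (h2 : (m : ℝ) < 2 + u) :
    (2 * m - 1) ^ m * exp u ≤ (2 * exp 1 * (1 + u)) ^ m := by
  have hexp : exp u ≤ exp (u / (1 + u)) ^ m := by
    rw [← exp_nat_mul, exp_le_exp, mul_div_assoc', le_div_iff₀ (by positivity)]
    nlinarith
  calc (2 * m - 1) ^ m * exp u ≤ (3 + 2 * u) ^ m * exp (u / (1 + u)) ^ m := by
        gcongr
        · linarith
        · linarith
    _ = ((3 + 2 * u) * exp (u / (1 + u))) ^ m := (mul_pow _ _ _).symm
    _ ≤ _ := pow_le_pow_left₀ (by positivity) (three_add_two_mul_mul_exp_div_le hu) m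

theorem log_exp_one_div_rpow {μ : ℝ} (hμ : 0 < μ) (d : ℕ) :
    log (exp 1 / μ ^ ((1 : ℝ) / d)) = 1 + -log μ / d := by
  rw [log_div (exp_pos 1).ne' (rpow_pos_of_pos hμ _).ne', log_exp, log_rpow hμ]
  ring

theorem exists_pow_two_mul_sub_one_mul_le {μ : ℝ} (hμ : 0 < μ) (hμ1 : μ ≤ 1) {d : ℕ}
    (hd : 0 < d) : ∃ m : ℕ, m ≠ 0 ∧ μ ^ (2 * m - 1) * ((2 * m - 1 : ℝ) ^ d) ^ m ≤
      (μ ^ 2 * (2 * exp 1 * (1 + -log μ / d)) ^ d) ^ m := by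
  set u := -log μ / d
  have hu : 0 ≤ u := div_nonneg (neg_nonneg.mpr (log_nonpos hμ.le hμ1)) d.cast_nonneg
  have hμu : μ * exp u ^ d = 1 := by
    rw [← exp_nat_mul, mul_div_cancel₀ _ (by positivity), exp_neg, exp_log hμ,
      mul_inv_cancel₀ hμ.ne']
  set m := ⌈1 + u⌉₊
  have hm : m ≠ 0 := (Nat.ceil_pos.mpr (by positivity)).ne'
  have hβ := two_mul_sub_one_nonneg hm
  have hexp := two_mul_sub_one_pow_mul_exp_le hu (Nat.le_ceil _)
    (by linarith [Nat.ceil_lt_add_one (by positivity : 0 ≤ 1 + u)])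
  refine ⟨m, hm, ?_⟩
  calc μ ^ (2 * m - 1) * ((2 * m - 1 : ℝ) ^ d) ^ m
      = μ ^ (2 * m - 1) * (μ * exp u ^ d) * ((2 * m - 1 : ℝ) ^ m) ^ d := by
        rw [hμu, mul_one, ← pow_mul, ← pow_mul, mul_comm d]
    _ = μ ^ (2 * m) * ((2 * m - 1) ^ m * exp u) ^ d := by
        rw [← pow_sub_one_mul (by omega : 2 * m ≠ 0) μ]
        ring
    _ ≤ μ ^ (2 * m) * ((2 * exp 1 * (1 + u)) ^ m) ^ d := by gcongr
    _ = (μ ^ 2 * (2 * exp 1 * (1 + u)) ^ d) ^ m := by ring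

/-- Level-`d` inequality: for `g : {-1,1}^n → [0,1]` and `d ≥ 1`,
`∑_{|S|=d} ĝ(S)^2 ≤ 4 E[g]^2 (2e ln(e / E[g]^{1/d}))^d`.  Note `E[g] = ĝ(∅)`. -/
theorem stmt1 (n d : ℕ) (hd : 0 < d) (g : (Fin n → Bool) → ℝ)
    (hg : ∀ x, g x ∈ Set.Icc (0 : ℝ) 1) :
    ∑ S ∈ Finset.univ.filter (fun S : Finset (Fin n) => S.card = d), (fhat g S) ^ 2
      ≤ 4 * (fhat g ∅) ^ 2 *
        (2 * Real.exp 1 *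
          Real.log (Real.exp 1 / (fhat g ∅) ^ ((1 : ℝ) / d))) ^ d := by
  set W := ∑ S ∈ Finset.univ.filter (fun S : Finset (Fin n) => S.card = d), (fhat g S) ^ 2
  set μ := fhat g ∅
  have hW : 0 ≤ W := sum_nonneg fun S _ => sq_nonneg _
  obtain ⟨hμ0, hμ1⟩ : μ ∈ Set.Icc 0 1 := fhat_empty_mem_Icc hg
  obtain hμ | hμ := hμ0.eq_or_lt
  · have hW0 : W ^ 1 ≤ μ ^ (2 * 1 - 1) * _ := sum_fhat_sq_pow_le hg d one_ne_zero
    rw [← hμ] at hW0 ⊢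
    simpa using hW0
  have hu : 0 ≤ -log μ / d := div_nonneg (neg_nonneg.mpr (log_nonpos hμ0 hμ1)) d.cast_nonneg
  have hbound : 0 ≤ μ ^ 2 * (2 * exp 1 * (1 + -log μ / d)) ^ d :=
    mul_nonneg (sq_nonneg μ) (pow_nonneg (mul_nonneg (by positivity) (by linarith)) d)
  obtain ⟨m, hm, hμm⟩ := exists_pow_two_mul_sub_one_mul_le hμ hμ1 hd
  have hWm := (pow_le_pow_iff_left₀ hW hbound hm).mp ((sum_fhat_sq_pow_le hg d hm).trans hμm)
  rw [log_exp_one_div_rpow hμ]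
  linarith
end

section
/- For every positive integer d and every real t₀ ≥ (2e)^{d/2}, the tail integral satisfies ∫_{t₀}^∞ e^{-(d/(2e)) t^{2/d}} dt ≤ 2e · t₀^{1-2/d} · e^{-(d/(2e)) t₀^{2/d}}. -/
open MeasureTheory Real Filter Set Topology

/-!
With `c = d / (2e)` and `p = 2 / d`, the function `G t = -2e · t^(1-p) · exp(-c t^p)` tends to `0`
at infinity and its derivative `(2 - 2e(1-p) t^(-p)) · exp(-c t^p)` dominates the integrand as
soon as `t^p ≥ 2e`, which is exactly the hypothesis on `t₀`. Integrating `G'` over `(t₀, ∞)` gives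
the bound `-G t₀`.
-/

/-- No integrability of `f` is assumed: when it fails, the integral is `0`. -/
theorem setIntegral_Ioi_le_of_hasDerivAt_of_le {f g g' : ℝ → ℝ} {a l : ℝ}
    (hderiv : ∀ x ∈ Ici a, HasDerivAt g (g' x) x) (hf : ∀ x ∈ Ioi a, 0 ≤ f x)
    (hfg : ∀ x ∈ Ioi a, f x ≤ g' x) (hg : Tendsto g atTop (𝓝 l)) :
    ∫ x in Ioi a, f x ≤ l - g a := by
  have hg' : ∀ x ∈ Ioi a, 0 ≤ g' x := fun x hx => (hf x hx).trans (hfg x hx)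
  rw [← integral_Ioi_of_hasDerivAt_of_nonneg' hderiv hg' hg]
  by_cases hfi : IntegrableOn f (Ioi a)
  · exact setIntegral_mono_on hfi (integrableOn_Ioi_deriv_of_nonneg' hderiv hg' hg)
      measurableSet_Ioi hfg
  · rw [integral_undef hfi]
    exact setIntegral_nonneg measurableSet_Ioi hg'

theorem hasDerivAt_rpow_one_sub_mul_exp_neg_mul_rpow {c p x : ℝ} (hx : 0 < x) :
    HasDerivAt (fun t => t ^ (1 - p) * exp (-c * t ^ p))
      (((1 - p) * x ^ (-p) - c * p) * exp (-c * x ^ p)) x := by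
  have hpow := hasDerivAt_rpow_const (x := x) (p := 1 - p) (Or.inl hx.ne')
  have hexp := ((hasDerivAt_rpow_const (x := x) (p := p) (Or.inl hx.ne')).const_mul (-c)).exp
  refine (hpow.mul hexp).congr_deriv ?_
  have hcancel : x ^ (1 - p) * x ^ (p - 1) = 1 := by
    rw [← rpow_add hx]; simp
  rw [show 1 - p - 1 = -p by ring]
  linear_combination -c * p * exp (-c * x ^ p) * hcancel

theorem tendsto_rpow_mul_exp_neg_mul_rpow_atTop_nhds_zero (q : ℝ) {c p : ℝ} (hc : 0 < c)
    (hp : 0 < p) : Tendsto (fun t => t ^ q * exp (-c * t ^ p)) atTop (𝓝 0) := by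
  refine ((tendsto_rpow_mul_exp_neg_mul_atTop_nhds_zero (q / p) c hc).comp
    (tendsto_rpow_atTop hp)).congr' ?_
  filter_upwards [eventually_gt_atTop 0] with t ht
  simp only [Function.comp_apply]
  rw [← rpow_mul ht.le, mul_div_cancel₀ _ hp.ne']

theorem integral_Ioi_exp_neg_mul_rpow_le {c p t₀ : ℝ} (hc : 0 < c) (hp : 0 < p) (ht₀ : 0 < t₀)
    (h : 2 * (1 - p) ≤ c * p * t₀ ^ p) :
    ∫ t in Ioi t₀, exp (-c * t ^ p) ≤ 2 / (c * p) * t₀ ^ (1 - p) * exp (-c * t₀ ^ p) := by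
  have hcp : 0 < c * p := mul_pos hc hp
  have hbound : ∀ x ∈ Ioi t₀,
      exp (-c * x ^ p) ≤ -(2 / (c * p)) * (((1 - p) * x ^ (-p) - c * p) * exp (-c * x ^ p)) := by
    intro x hx
    have hx0 : 0 < x := ht₀.trans hx
    have hxp : 2 * (1 - p) ≤ c * p * x ^ p :=
      h.trans (by gcongr; exact (mem_Ioi.1 hx).le)
    have hfactor : 1 ≤ -(2 / (c * p)) * ((1 - p) * x ^ (-p) - c * p) := by
      rw [rpow_neg hx0.le]
      have hxp_pos := rpow_pos_of_pos hx0 p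
      rw [← sub_nonneg]
      field_simp
      nlinarith
    nlinarith [exp_pos (-c * x ^ p)]
  have key := setIntegral_Ioi_le_of_hasDerivAt_of_le
    (fun x hx => (hasDerivAt_rpow_one_sub_mul_exp_neg_mul_rpow (c := c) (p := p)
      (ht₀.trans_le hx)).const_mul (-(2 / (c * p))))
    (fun x _ => (exp_pos _).le) hbound
    ((tendsto_rpow_mul_exp_neg_mul_rpow_atTop_nhds_zero (1 - p) hc hp).const_mul (-(2 / (c * p))))
  simpa [mul_assoc] using key

theorem stmt3 (d : ℕ) (hd : 0 < d) (t₀ : ℝ)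
    (ht : (2 * Real.exp 1) ^ ((d : ℝ) / 2) ≤ t₀) :
    ∫ t in Set.Ioi t₀, Real.exp (-((d : ℝ) / (2 * Real.exp 1)) * t ^ (2 / (d : ℝ)))
      ≤ 2 * Real.exp 1 * t₀ ^ (1 - 2 / (d : ℝ)) *
        Real.exp (-((d : ℝ) / (2 * Real.exp 1)) * t₀ ^ (2 / (d : ℝ))) := by
  have hd' : (0 : ℝ) < d := by exact_mod_cast hd
  have he : 0 < 2 * exp 1 := by positivity
  have hcp : (d : ℝ) / (2 * exp 1) * (2 / d) = (exp 1)⁻¹ := by field_simp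
  have ht₀ : 0 < t₀ := (rpow_pos_of_pos he _).trans_le ht
  have ht₀p : 2 * exp 1 ≤ t₀ ^ (2 / (d : ℝ)) := by
    calc 2 * exp 1 = ((2 * exp 1) ^ ((d : ℝ) / 2)) ^ (2 / (d : ℝ)) := by
          rw [← rpow_mul he.le, show (d : ℝ) / 2 * (2 / d) = 1 by field_simp, rpow_one]
      _ ≤ t₀ ^ (2 / (d : ℝ)) := by gcongr
  convert integral_Ioi_exp_neg_mul_rpow_le (c := d / (2 * exp 1)) (p := 2 / d)
    (by positivity) (by positivity) ht₀ ?_ using 2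
  · rw [hcp, div_inv_eq_mul]
  · rw [hcp, ← div_eq_inv_mul, le_div_iff₀ (exp_pos 1)]
    nlinarith [mul_pos (div_pos two_pos hd') (exp_pos 1)]
end

section
/- Let φ, ψ : (0,1] → ℝ be differentiable with φ, ψ ≥ 0, φ', ψ' > 0, and φ'', ψ'' ≤ 0. Define Ψ(x,y) = φ'(x)ψ(y) + ψ'(x)φ(y) − φ(x)ψ'(y) − ψ(x)φ'(y). Then for all x, y ∈ (0,1] with y ≤ x, we have Ψ(x,y) ≤ 0. -/
/-!
Fix `x` and view `Ψ(x, ·)` as a function of `y`. It vanishes at `y = x`, and its derivative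
`φ'(x)ψ'(y) + ψ'(x)φ'(y) − φ(x)ψ''(y) − ψ(x)φ''(y)` is a sum of nonnegative terms, because
`φ, ψ ≥ 0`, `φ', ψ' > 0` and `φ'', ψ'' ≤ 0`. Hence `Ψ(x, ·)` is nondecreasing and
`Ψ(x, y) ≤ Ψ(x, x) = 0` for `y ≤ x`.
-/

open Set

lemma monotoneOn_of_hasDerivAt_nonneg_on {D : Set ℝ} (hD : Convex ℝ D) {f f' : ℝ → ℝ}
    (hf : ∀ t ∈ D, HasDerivAt f (f' t) t) (hf' : ∀ t ∈ D, 0 ≤ f' t) : MonotoneOn f D :=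
  monotoneOn_of_hasDerivWithinAt_nonneg hD
    (fun t ht ↦ (hf t ht).continuousAt.continuousWithinAt)
    (fun t ht ↦ (hf t (interior_subset ht)).hasDerivWithinAt)
    (fun t ht ↦ hf' t (interior_subset ht))

/-- The function `Ψ(x, y)` of the statement. -/
def crossWronskian (φ ψ φ' ψ' : ℝ → ℝ) (x y : ℝ) : ℝ :=
  φ' x * ψ y + ψ' x * φ y - φ x * ψ' y - ψ x * φ' y

section

variable {φ ψ φ' ψ' φ'' ψ'' : ℝ → ℝ}

lemma crossWronskian_self (x : ℝ) : crossWronskian φ ψ φ' ψ' x x = 0 := by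
  unfold crossWronskian
  ring

lemma hasDerivAt_crossWronskian {x t : ℝ} (hφ : HasDerivAt φ (φ' t) t)
    (hψ : HasDerivAt ψ (ψ' t) t) (hφ' : HasDerivAt φ' (φ'' t) t)
    (hψ' : HasDerivAt ψ' (ψ'' t) t) :
    HasDerivAt (crossWronskian φ ψ φ' ψ' x)
      (φ' x * ψ' t + ψ' x * φ' t - φ x * ψ'' t - ψ x * φ'' t) t :=
  (((hψ.const_mul _).add (hφ.const_mul _)).sub (hψ'.const_mul _)).sub (hφ'.const_mul _)

lemma monotoneOn_crossWronskian {D : Set ℝ} (hD : Convex ℝ D) {x : ℝ}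
    (hφx : 0 ≤ φ x) (hψx : 0 ≤ ψ x) (hφ'x : 0 ≤ φ' x) (hψ'x : 0 ≤ ψ' x)
    (hφd : ∀ t ∈ D, HasDerivAt φ (φ' t) t) (hψd : ∀ t ∈ D, HasDerivAt ψ (ψ' t) t)
    (hφdd : ∀ t ∈ D, HasDerivAt φ' (φ'' t) t) (hψdd : ∀ t ∈ D, HasDerivAt ψ' (ψ'' t) t)
    (hφ' : ∀ t ∈ D, 0 ≤ φ' t) (hψ' : ∀ t ∈ D, 0 ≤ ψ' t)
    (hφ'' : ∀ t ∈ D, φ'' t ≤ 0) (hψ'' : ∀ t ∈ D, ψ'' t ≤ 0) :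
    MonotoneOn (crossWronskian φ ψ φ' ψ' x) D := by
  refine monotoneOn_of_hasDerivAt_nonneg_on hD
    (fun t ht ↦ hasDerivAt_crossWronskian (hφd t ht) (hψd t ht) (hφdd t ht) (hψdd t ht))
    fun t ht ↦ ?_
  have h₁ : 0 ≤ φ' x * ψ' t := mul_nonneg hφ'x (hψ' t ht)
  have h₂ : 0 ≤ ψ' x * φ' t := mul_nonneg hψ'x (hφ' t ht)
  have h₃ : φ x * ψ'' t ≤ 0 := mul_nonpos_of_nonneg_of_nonpos hφx (hψ'' t ht)
  have h₄ : ψ x * φ'' t ≤ 0 := mul_nonpos_of_nonneg_of_nonpos hψx (hφ'' t ht)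
  linarith

end

/-- Let `φ, ψ : (0,1] → ℝ` be nonnegative, strictly increasing and concave (witnessed by
first derivatives `φ', ψ' > 0` and second derivatives `φ'', ψ'' ≤ 0`).  Then
`Ψ(x,y) = φ'(x)ψ(y) + ψ'(x)φ(y) − φ(x)ψ'(y) − ψ(x)φ'(y) ≤ 0` whenever `y ≤ x` in `(0,1]`. -/
theorem stmt14 (φ ψ φ' ψ' φ'' ψ'' : ℝ → ℝ)
    (hφ0 : ∀ x ∈ Set.Ioc (0 : ℝ) 1, 0 ≤ φ x)
    (hψ0 : ∀ x ∈ Set.Ioc (0 : ℝ) 1, 0 ≤ ψ x)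
    (hφd : ∀ x ∈ Set.Ioc (0 : ℝ) 1, HasDerivAt φ (φ' x) x)
    (hψd : ∀ x ∈ Set.Ioc (0 : ℝ) 1, HasDerivAt ψ (ψ' x) x)
    (hφ'pos : ∀ x ∈ Set.Ioc (0 : ℝ) 1, 0 < φ' x)
    (hψ'pos : ∀ x ∈ Set.Ioc (0 : ℝ) 1, 0 < ψ' x)
    (hφdd : ∀ x ∈ Set.Ioc (0 : ℝ) 1, HasDerivAt φ' (φ'' x) x)
    (hψdd : ∀ x ∈ Set.Ioc (0 : ℝ) 1, HasDerivAt ψ' (ψ'' x) x)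
    (hφ'' : ∀ x ∈ Set.Ioc (0 : ℝ) 1, φ'' x ≤ 0)
    (hψ'' : ∀ x ∈ Set.Ioc (0 : ℝ) 1, ψ'' x ≤ 0)
    (x y : ℝ) (hx : x ∈ Set.Ioc (0 : ℝ) 1) (hy : y ∈ Set.Ioc (0 : ℝ) 1) (hyx : y ≤ x) :
    φ' x * ψ y + ψ' x * φ y - φ x * ψ' y - ψ x * φ' y ≤ 0 := by
  have hmono : MonotoneOn (crossWronskian φ ψ φ' ψ' x) (Ioc 0 1) :=
    monotoneOn_crossWronskian (convex_Ioc 0 1) (hφ0 x hx) (hψ0 x hx)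
      (hφ'pos x hx).le (hψ'pos x hx).le hφd hψd hφdd hψdd
      (fun t ht ↦ (hφ'pos t ht).le) (fun t ht ↦ (hψ'pos t ht).le) hφ'' hψ''
  exact (hmono hy hx hyx).trans_eq (crossWronskian_self x)
end

section
/- For every integer d ≥ 1, integer ℓ with 1 ≤ ℓ ≤ d, reals α ∈ (0,1] and positive integers z_1,...,z_ℓ with ∑_{i=1}^ℓ z_i = d, we have ∏_{i=1}^ℓ (ln(e/α^{1/z_i}))^{z_i/2} ≤ (ln(e/α^{ℓ/d}))^{d/2}. -/
open Finset Real

theorem log_exp_one_div_rpow_s16 {α : ℝ} (hα : 0 < α) (x : ℝ) :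
    log (exp 1 / α ^ x) = 1 + x * log α⁻¹ := by
  rw [log_div (exp_ne_zero 1) (rpow_pos_of_pos hα x).ne', log_exp, log_rpow hα, log_inv]
  ring

/-- Weighted AM–GM with weights `w i` at the points `1 + t / w i`, whose weighted sum is
`∑ w i + #s * t`. -/
theorem prod_one_add_div_rpow_le {ι : Type*} (s : Finset ι) {w : ι → ℝ}
    (hw : ∀ i ∈ s, 0 < w i) {t : ℝ} (ht : 0 ≤ t) {r : ℝ} (hr : 0 ≤ r) :
    ∏ i ∈ s, (1 + t / w i) ^ (w i * r)
      ≤ (1 + #s * t / ∑ i ∈ s, w i) ^ ((∑ i ∈ s, w i) * r) := by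
  rcases s.eq_empty_or_nonempty with rfl | hs
  · simp
  set W := ∑ i ∈ s, w i
  have hW : 0 < W := sum_pos hw hs
  have hx : ∀ i ∈ s, 0 ≤ 1 + t / w i := fun i hi => by have := hw i hi; positivity
  have hwx : ∑ i ∈ s, w i * (1 + t / w i) = W + #s * t := by
    rw [← nsmul_eq_mul, ← sum_const, ← sum_add_distrib]
    exact sum_congr rfl fun i hi => by field_simp [(hw i hi).ne']
  have amgm : (∏ i ∈ s, (1 + t / w i) ^ w i) ^ W⁻¹ ≤ 1 + #s * t / W := by
    have := geom_mean_le_arith_mean s w _ (fun i hi => (hw i hi).le) hW hx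
    rwa [hwx, add_div, div_self hW.ne'] at this
  have hP : 0 ≤ ∏ i ∈ s, (1 + t / w i) ^ w i :=
    prod_nonneg fun i hi => rpow_nonneg (hx i hi) _
  calc ∏ i ∈ s, (1 + t / w i) ^ (w i * r)
      = ((∏ i ∈ s, (1 + t / w i) ^ w i) ^ W⁻¹) ^ (W * r) := by
        rw [← rpow_mul hP, inv_mul_cancel_left₀ hW.ne', ← finsetProd_rpow s _
          fun i hi => rpow_nonneg (hx i hi) _]
        exact prod_congr rfl fun i hi => rpow_mul (hx i hi) _ _
    _ ≤ (1 + #s * t / W) ^ (W * r) :=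
        rpow_le_rpow (rpow_nonneg hP _) amgm (by positivity)

theorem stmt16_general (d ℓ : ℕ)
    (α : ℝ) (hα : α ∈ Set.Ioc (0 : ℝ) 1)
    (z : Fin ℓ → ℕ) (hz : ∀ i, 1 ≤ z i) (hsum : ∑ i, z i = d) :
    ∏ i, (Real.log (Real.exp 1 / α ^ ((1 : ℝ) / (z i)))) ^ ((z i : ℝ) / 2)
      ≤ (Real.log (Real.exp 1 / α ^ ((ℓ : ℝ) / (d : ℝ)))) ^ ((d : ℝ) / 2) := by
  obtain ⟨hα0, hα1⟩ := hα
  have ht : 0 ≤ log α⁻¹ := log_nonneg (one_le_inv₀ hα0 |>.mpr hα1)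
  have hd : ∑ i, (z i : ℝ) = d := by exact_mod_cast hsum
  have key := prod_one_add_div_rpow_le univ (w := fun i => (z i : ℝ))
    (fun i _ => by exact_mod_cast hz i) ht (r := 2⁻¹) (by norm_num)
  simp only [card_univ, Fintype.card_fin, hd] at key
  simp_rw [log_exp_one_div_rpow_s16 hα0, one_div_mul_eq_div, div_mul_eq_mul_div,
    div_eq_mul_inv _ (2 : ℝ)]
  exact key

/-- Weighted AM–GM consequence: for positive integers `z₁,…,z_ℓ` with `∑ zᵢ = d` and
`α ∈ (0,1]`, `∏ᵢ (ln(e/α^{1/zᵢ}))^{zᵢ/2} ≤ (ln(e/α^{ℓ/d}))^{d/2}`. -/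
theorem stmt16 (d ℓ : ℕ) (hd : 1 ≤ d) (hℓ1 : 1 ≤ ℓ) (hℓd : ℓ ≤ d)
    (α : ℝ) (hα : α ∈ Set.Ioc (0 : ℝ) 1)
    (z : Fin ℓ → ℕ) (hz : ∀ i, 1 ≤ z i) (hsum : ∑ i, z i = d) :
    ∏ i, (Real.log (Real.exp 1 / α ^ ((1 : ℝ) / (z i)))) ^ ((z i : ℝ) / 2)
      ≤ (Real.log (Real.exp 1 / α ^ ((ℓ : ℝ) / (d : ℝ)))) ^ ((d : ℝ) / 2) :=
  stmt16_general d ℓ α hα z hz hsum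
end
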